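/- arXiv:2009.14787 — 7 statements merged into one kernel-verified Lean document; each statement's English description precedes it below -/
import Mathlib

section
/- For every formula C of 2Int and all finite multisets Γ, Δ of formulas, the sequent (Γ, C; Δ) ⊢⁺ C is derivable in SC2Int. -/
/-- Polarity of the derivability relation: `pos` for verification (⊢⁺),
`neg` for falsification (⊢⁻). -/
inductive Pol : Type where
  | pos : Pol
  | neg : Pol

/-- Formulas of the bi-intuitionistic logic 2Int. -/
inductive Form : Type where
  | atom : ℕ → Form
  | bot : Form
  | top : Form
  | conj : Form → Form → Form
  | disj : Form → Form → Form
  | imp : Form → Form → Form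
  | coimp : Form → Form → Form

open Form Pol

/-- `Deriv Γ Δ s C n` means the sequent (Γ; Δ) ⊢^s C is derivable in SC2Int
with a derivation of height at most `n`. Zero-premise rules have height 0
(hence are derivable with any bound `n`), and each logical rule adds one to
the (common bound on the) heights of its premises. -/
inductive Deriv : Multiset Form → Multiset Form → Pol → Form → ℕ → Prop where
  | refPos (Γ Δ : Multiset Form) (p : ℕ) (n : ℕ) :
      Deriv (atom p ::ₘ Γ) Δ pos (atom p) n
  | refNeg (Γ Δ : Multiset Form) (p : ℕ) (n : ℕ) :
      Deriv Γ (atom p ::ₘ Δ) neg (atom p) n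
  | botLa (Γ Δ : Multiset Form) (s : Pol) (C : Form) (n : ℕ) :
      Deriv (bot ::ₘ Γ) Δ s C n
  | topLc (Γ Δ : Multiset Form) (s : Pol) (C : Form) (n : ℕ) :
      Deriv Γ (top ::ₘ Δ) s C n
  | botRneg (Γ Δ : Multiset Form) (n : ℕ) :
      Deriv Γ Δ neg bot n
  | topRpos (Γ Δ : Multiset Form) (n : ℕ) :
      Deriv Γ Δ pos top n
  | conjRpos {Γ Δ : Multiset Form} {A B : Form} {n : ℕ} :
      Deriv Γ Δ pos A n → Deriv Γ Δ pos B n → Deriv Γ Δ pos (conj A B) (n + 1)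
  | conjLa {Γ Δ : Multiset Form} {A B : Form} {s : Pol} {C : Form} {n : ℕ} :
      Deriv (A ::ₘ B ::ₘ Γ) Δ s C n → Deriv (conj A B ::ₘ Γ) Δ s C (n + 1)
  | conjRneg1 {Γ Δ : Multiset Form} {A B : Form} {n : ℕ} :
      Deriv Γ Δ neg A n → Deriv Γ Δ neg (conj A B) (n + 1)
  | conjRneg2 {Γ Δ : Multiset Form} {A B : Form} {n : ℕ} :
      Deriv Γ Δ neg B n → Deriv Γ Δ neg (conj A B) (n + 1)
  | conjLc {Γ Δ : Multiset Form} {A B : Form} {s : Pol} {C : Form} {n : ℕ} :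
      Deriv Γ (A ::ₘ Δ) s C n → Deriv Γ (B ::ₘ Δ) s C n →
      Deriv Γ (conj A B ::ₘ Δ) s C (n + 1)
  | disjRpos1 {Γ Δ : Multiset Form} {A B : Form} {n : ℕ} :
      Deriv Γ Δ pos A n → Deriv Γ Δ pos (disj A B) (n + 1)
  | disjRpos2 {Γ Δ : Multiset Form} {A B : Form} {n : ℕ} :
      Deriv Γ Δ pos B n → Deriv Γ Δ pos (disj A B) (n + 1)
  | disjLa {Γ Δ : Multiset Form} {A B : Form} {s : Pol} {C : Form} {n : ℕ} :
      Deriv (A ::ₘ Γ) Δ s C n → Deriv (B ::ₘ Γ) Δ s C n →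
      Deriv (disj A B ::ₘ Γ) Δ s C (n + 1)
  | disjRneg {Γ Δ : Multiset Form} {A B : Form} {n : ℕ} :
      Deriv Γ Δ neg A n → Deriv Γ Δ neg B n → Deriv Γ Δ neg (disj A B) (n + 1)
  | disjLc {Γ Δ : Multiset Form} {A B : Form} {s : Pol} {C : Form} {n : ℕ} :
      Deriv Γ (A ::ₘ B ::ₘ Δ) s C n → Deriv Γ (disj A B ::ₘ Δ) s C (n + 1)
  | impRpos {Γ Δ : Multiset Form} {A B : Form} {n : ℕ} :
      Deriv (A ::ₘ Γ) Δ pos B n → Deriv Γ Δ pos (imp A B) (n + 1)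
  | impLa {Γ Δ : Multiset Form} {A B : Form} {s : Pol} {C : Form} {n : ℕ} :
      Deriv (imp A B ::ₘ Γ) Δ pos A n → Deriv (B ::ₘ Γ) Δ s C n →
      Deriv (imp A B ::ₘ Γ) Δ s C (n + 1)
  | impRneg {Γ Δ : Multiset Form} {A B : Form} {n : ℕ} :
      Deriv Γ Δ pos A n → Deriv Γ Δ neg B n → Deriv Γ Δ neg (imp A B) (n + 1)
  | impLc {Γ Δ : Multiset Form} {A B : Form} {s : Pol} {C : Form} {n : ℕ} :
      Deriv (A ::ₘ Γ) (B ::ₘ Δ) s C n → Deriv Γ (imp A B ::ₘ Δ) s C (n + 1)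
  | coimpRpos {Γ Δ : Multiset Form} {A B : Form} {n : ℕ} :
      Deriv Γ Δ pos A n → Deriv Γ Δ neg B n → Deriv Γ Δ pos (coimp A B) (n + 1)
  | coimpLa {Γ Δ : Multiset Form} {A B : Form} {s : Pol} {C : Form} {n : ℕ} :
      Deriv (A ::ₘ Γ) (B ::ₘ Δ) s C n → Deriv (coimp A B ::ₘ Γ) Δ s C (n + 1)
  | coimpRneg {Γ Δ : Multiset Form} {A B : Form} {n : ℕ} :
      Deriv Γ (B ::ₘ Δ) neg A n → Deriv Γ Δ neg (coimp A B) (n + 1)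
  | coimpLc {Γ Δ : Multiset Form} {A B : Form} {s : Pol} {C : Form} {n : ℕ} :
      Deriv Γ (coimp A B ::ₘ Δ) neg B n → Deriv Γ (A ::ₘ Δ) s C n →
      Deriv Γ (coimp A B ::ₘ Δ) s C (n + 1)

/-- The sequent (Γ; Δ) ⊢^s C is derivable in SC2Int (with some height). -/
def Derivable (Γ Δ : Multiset Form) (s : Pol) (C : Form) : Prop :=
  ∃ n : ℕ, Deriv Γ Δ s C n

lemma Deriv.mono {Γ Δ : Multiset Form} {s : Pol} {C : Form} {n : ℕ}
    (h : Deriv Γ Δ s C n) : Deriv Γ Δ s C (n + 1) := by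
  induction h <;>
    first
      | exact Deriv.conjRneg2 (by assumption)
      | exact Deriv.disjRpos2 (by assumption)
      | (constructor <;> assumption)

lemma Deriv.mono_le {Γ Δ : Multiset Form} {s : Pol} {C : Form} {n m : ℕ}
    (h : Deriv Γ Δ s C n) (hnm : n ≤ m) : Deriv Γ Δ s C m := by
  induction hnm with
  | refl => exact h
  | step _ ih => exact ih.mono

lemma refl_both (C : Form) :
    ∃ n, (∀ Γ Δ : Multiset Form, Deriv (C ::ₘ Γ) Δ pos C n) ∧
         (∀ Γ Δ : Multiset Form, Deriv Γ (C ::ₘ Δ) neg C n) := by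
  induction C with
  | atom p => exact ⟨0, fun Γ Δ => .refPos Γ Δ p 0, fun Γ Δ => .refNeg Γ Δ p 0⟩
  | bot => exact ⟨0, fun Γ Δ => .botLa Γ Δ pos bot 0, fun Γ Δ => .botRneg Γ _ 0⟩
  | top => exact ⟨0, fun Γ Δ => .topRpos _ Δ 0, fun Γ Δ => .topLc Γ Δ neg top 0⟩
  | conj A B ihA ihB =>
    obtain ⟨na, hpa, hna⟩ := ihA
    obtain ⟨nb, hpb, hnb⟩ := ihB
    refine ⟨max na nb + 2, fun Γ Δ => ?_, fun Γ Δ => ?_⟩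
    · refine .conjLa (.conjRpos ((hpa (B ::ₘ Γ) Δ).mono_le (le_max_left na nb)) ?_)
      rw [Multiset.cons_swap]
      exact (hpb (A ::ₘ Γ) Δ).mono_le (le_max_right na nb)
    · exact .conjLc (.conjRneg1 ((hna Γ Δ).mono_le (le_max_left na nb)))
        (.conjRneg2 ((hnb Γ Δ).mono_le (le_max_right na nb)))
  | disj A B ihA ihB =>
    obtain ⟨na, hpa, hna⟩ := ihA
    obtain ⟨nb, hpb, hnb⟩ := ihB
    refine ⟨max na nb + 2, fun Γ Δ => ?_, fun Γ Δ => ?_⟩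
    · exact .disjLa (.disjRpos1 ((hpa Γ Δ).mono_le (le_max_left na nb)))
        (.disjRpos2 ((hpb Γ Δ).mono_le (le_max_right na nb)))
    · refine .disjLc (.disjRneg ((hna Γ (B ::ₘ Δ)).mono_le (le_max_left na nb)) ?_)
      rw [Multiset.cons_swap]
      exact (hnb Γ (A ::ₘ Δ)).mono_le (le_max_right na nb)
  | imp A B ihA ihB =>
    obtain ⟨na, hpa, hna⟩ := ihA
    obtain ⟨nb, hpb, hnb⟩ := ihB
    refine ⟨max na nb + 2, fun Γ Δ => ?_, fun Γ Δ => ?_⟩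
    · refine .impRpos ?_
      rw [Multiset.cons_swap]
      refine .impLa ?_ ((hpb (A ::ₘ Γ) Δ).mono_le (le_max_right na nb))
      rw [Multiset.cons_swap]
      exact (hpa (imp A B ::ₘ Γ) Δ).mono_le (le_max_left na nb)
    · exact .impLc (.impRneg ((hpa Γ (B ::ₘ Δ)).mono_le (le_max_left na nb))
        ((hnb (A ::ₘ Γ) Δ).mono_le (le_max_right na nb)))
  | coimp A B ihA ihB =>
    obtain ⟨na, hpa, hna⟩ := ihA
    obtain ⟨nb, hpb, hnb⟩ := ihB
    refine ⟨max na nb + 2, fun Γ Δ => ?_, fun Γ Δ => ?_⟩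
    · exact .coimpLa (.coimpRpos ((hpa Γ (B ::ₘ Δ)).mono_le (le_max_left na nb))
        ((hnb (A ::ₘ Γ) Δ).mono_le (le_max_right na nb)))
    · refine .coimpRneg ?_
      rw [Multiset.cons_swap]
      refine .coimpLc ?_ ((hna Γ (B ::ₘ Δ)).mono_le (le_max_left na nb))
      rw [Multiset.cons_swap]
      exact (hnb Γ (coimp A B ::ₘ Δ)).mono_le (le_max_right na nb)

theorem reflexivity_pos (C : Form) (Γ Δ : Multiset Form) :
    Derivable (C ::ₘ Γ) Δ Pol.pos C := by
  obtain ⟨n, hp, -⟩ := refl_both C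
  exact ⟨n, hp Γ Δ⟩
end

section
/- Height-preserving admissibility of weakening into the assumptions: for all finite multisets Γ, Δ, all formulas C and D, every * ∈ {+, −}, and every natural number n, if the sequent (Γ; Δ) ⊢* C is derivable in SC2Int with height at most n, then the sequent (Γ, D; Δ) ⊢* C is derivable in SC2Int with height at most n. -/
open Form Pol

theorem weakening_assumptions (Γ Δ : Multiset Form) (C D : Form) (s : Pol) (n : ℕ)
    (h : Deriv Γ Δ s C n) : Deriv (D ::ₘ Γ) Δ s C n := by
  induction h with
  | refPos Γ Δ p n => rw [Multiset.cons_swap]; exact .refPos _ _ _ _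
  | refNeg Γ Δ p n => exact .refNeg _ _ _ _
  | botLa Γ Δ s C n => rw [Multiset.cons_swap]; exact .botLa _ _ _ _ _
  | topLc Γ Δ s C n => exact .topLc _ _ _ _ _
  | botRneg Γ Δ n => exact .botRneg _ _ _
  | topRpos Γ Δ n => exact .topRpos _ _ _
  | conjRpos _ _ ih1 ih2 => exact .conjRpos ih1 ih2
  | @conjLa Γ Δ A B s C n _ ih =>
      rw [Multiset.cons_swap]
      exact .conjLa (by rw [Multiset.cons_swap D A, Multiset.cons_swap D B] at ih; exact ih)
  | conjRneg1 _ ih => exact .conjRneg1 ih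
  | conjRneg2 _ ih => exact .conjRneg2 ih
  | conjLc _ _ ih1 ih2 => exact .conjLc ih1 ih2
  | disjRpos1 _ ih => exact .disjRpos1 ih
  | disjRpos2 _ ih => exact .disjRpos2 ih
  | @disjLa Γ Δ A B s C n _ _ ih1 ih2 =>
      rw [Multiset.cons_swap]
      exact .disjLa (by rw [Multiset.cons_swap D A] at ih1; exact ih1)
        (by rw [Multiset.cons_swap D B] at ih2; exact ih2)
  | disjRneg _ _ ih1 ih2 => exact .disjRneg ih1 ih2
  | disjLc _ ih => exact .disjLc ih
  | @impRpos Γ Δ A B n _ ih =>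
      exact .impRpos (by rw [Multiset.cons_swap D A] at ih; exact ih)
  | @impLa Γ Δ A B s C n _ _ ih1 ih2 =>
      rw [Multiset.cons_swap]
      exact .impLa (by rw [Multiset.cons_swap D (imp A B)] at ih1; exact ih1)
        (by rw [Multiset.cons_swap D B] at ih2; exact ih2)
  | impRneg _ _ ih1 ih2 => exact .impRneg ih1 ih2
  | @impLc Γ Δ A B s C n _ ih =>
      exact .impLc (by rw [Multiset.cons_swap D A] at ih; exact ih)
  | coimpRpos _ _ ih1 ih2 => exact .coimpRpos ih1 ih2
  | @coimpLa Γ Δ A B s C n _ ih =>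
      rw [Multiset.cons_swap]
      exact .coimpLa (by rw [Multiset.cons_swap D A] at ih; exact ih)
  | coimpRneg _ ih => exact .coimpRneg ih
  | coimpLc _ _ ih1 ih2 => exact .coimpLc ih1 ih2
end

section
/- Height-preserving admissibility of weakening into the counterassumptions: for all finite multisets Γ, Δ, all formulas C and D, every * ∈ {+, −}, and every natural number n, if the sequent (Γ; Δ) ⊢* C is derivable in SC2Int with height at most n, then the sequent (Γ; Δ, D) ⊢* C is derivable in SC2Int with height at most n. -/
open Form Pol

theorem weakening_counterassumptions (Γ Δ : Multiset Form) (C D : Form) (s : Pol) (n : ℕ)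
    (h : Deriv Γ Δ s C n) : Deriv Γ (D ::ₘ Δ) s C n := by
  induction h with
  | refPos Γ Δ p n => exact Deriv.refPos _ _ _ _
  | refNeg Γ Δ p n => rw [Multiset.cons_swap]; exact Deriv.refNeg _ _ _ _
  | botLa => exact Deriv.botLa _ _ _ _ _
  | topLc => rw [Multiset.cons_swap]; exact Deriv.topLc _ _ _ _ _
  | botRneg => exact Deriv.botRneg _ _ _
  | topRpos => exact Deriv.topRpos _ _ _
  | conjRpos _ _ ih1 ih2 => exact Deriv.conjRpos ih1 ih2
  | conjLa _ ih => exact Deriv.conjLa ih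
  | conjRneg1 _ ih => exact Deriv.conjRneg1 ih
  | conjRneg2 _ ih => exact Deriv.conjRneg2 ih
  | conjLc _ _ ih1 ih2 =>
      rw [Multiset.cons_swap]
      exact Deriv.conjLc (by rw [Multiset.cons_swap]; exact ih1)
        (by rw [Multiset.cons_swap]; exact ih2)
  | disjRpos1 _ ih => exact Deriv.disjRpos1 ih
  | disjRpos2 _ ih => exact Deriv.disjRpos2 ih
  | disjLa _ _ ih1 ih2 => exact Deriv.disjLa ih1 ih2
  | disjRneg _ _ ih1 ih2 => exact Deriv.disjRneg ih1 ih2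
  | disjLc _ ih =>
      rw [Multiset.cons_swap]
      refine Deriv.disjLc ?_
      have e : ∀ (A B : Form) (Δ : Multiset Form),
          A ::ₘ B ::ₘ D ::ₘ Δ = D ::ₘ A ::ₘ B ::ₘ Δ := by
        intro A B Δ; rw [Multiset.cons_swap B, Multiset.cons_swap A]
      rw [e]; exact ih
  | impRpos _ ih => exact Deriv.impRpos ih
  | impLa _ _ ih1 ih2 => exact Deriv.impLa ih1 ih2
  | impRneg _ _ ih1 ih2 => exact Deriv.impRneg ih1 ih2
  | impLc _ ih =>
      rw [Multiset.cons_swap]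
      refine Deriv.impLc ?_
      rw [Multiset.cons_swap]
      exact ih
  | coimpRpos _ _ ih1 ih2 => exact Deriv.coimpRpos ih1 ih2
  | coimpLa _ ih =>
      refine Deriv.coimpLa ?_
      rw [Multiset.cons_swap]
      exact ih
  | coimpRneg _ ih =>
      refine Deriv.coimpRneg ?_
      rw [Multiset.cons_swap]
      exact ih
  | coimpLc _ _ ih1 ih2 =>
      rw [Multiset.cons_swap]
      exact Deriv.coimpLc (by rw [Multiset.cons_swap]; exact ih1)
        (by rw [Multiset.cons_swap]; exact ih2)
end

section
/- Height-preserving invertibility of weakening by ⊤ in the assumptions: for all finite multisets Γ, Δ, every formula C, every * ∈ {+, −}, and every natural number n, if the sequent (Γ, ⊤; Δ) ⊢* C is derivable in SC2Int with height at most n, then the sequent (Γ; Δ) ⊢* C is derivable in SC2Int with height at most n. -/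
open Form Pol

private lemma top_cons_split {F : Form} {Γ1 Γ : Multiset Form}
    (hne : F ≠ Form.top) (hEq : F ::ₘ Γ1 = Form.top ::ₘ Γ) :
    ∃ u, Γ1 = Form.top ::ₘ u ∧ Γ = F ::ₘ u := by
  rcases Multiset.cons_eq_cons.mp hEq with ⟨h1, h2⟩ | ⟨_, u, h1, h2⟩
  · exact absurd h1 hne
  · exact ⟨u, h1, h2⟩

private lemma inv_top_aux {Γ0 Δ : Multiset Form} {s : Pol} {C : Form} {n : ℕ}
    (h : Deriv Γ0 Δ s C n) :
    ∀ Γ, Γ0 = Form.top ::ₘ Γ → Deriv Γ Δ s C n := by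
  induction h with
  | refPos Γ1 Δ1 p m =>
    intro Γ hEq
    obtain ⟨u, h1, h2⟩ := top_cons_split (by simp) hEq
    subst h2; exact Deriv.refPos u Δ1 p m
  | refNeg Γ1 Δ1 p m =>
    intro Γ hEq; exact Deriv.refNeg Γ Δ1 p m
  | botLa Γ1 Δ1 s1 C1 m =>
    intro Γ hEq
    obtain ⟨u, h1, h2⟩ := top_cons_split (by simp) hEq
    subst h2; exact Deriv.botLa u Δ1 s1 C1 m
  | topLc Γ1 Δ1 s1 C1 m =>
    intro Γ hEq; exact Deriv.topLc Γ Δ1 s1 C1 m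
  | botRneg Γ1 Δ1 m => intro Γ hEq; exact Deriv.botRneg Γ Δ1 m
  | topRpos Γ1 Δ1 m => intro Γ hEq; exact Deriv.topRpos Γ Δ1 m
  | conjRpos hA hB ihA ihB =>
    intro Γ hEq; exact Deriv.conjRpos (ihA Γ hEq) (ihB Γ hEq)
  | conjLa hp ih =>
    rename_i Γ1 Δ1 A B s1 C1 m
    intro Γ hEq
    obtain ⟨u, h1, h2⟩ := top_cons_split (by simp) hEq
    subst h1; subst h2
    apply Deriv.conjLa
    apply ih
    rw [Multiset.cons_swap B, Multiset.cons_swap A]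
  | conjRneg1 hA ih => intro Γ hEq; exact Deriv.conjRneg1 (ih Γ hEq)
  | conjRneg2 hB ih => intro Γ hEq; exact Deriv.conjRneg2 (ih Γ hEq)
  | conjLc hA hB ihA ihB =>
    intro Γ hEq; exact Deriv.conjLc (ihA Γ hEq) (ihB Γ hEq)
  | disjRpos1 hA ih => intro Γ hEq; exact Deriv.disjRpos1 (ih Γ hEq)
  | disjRpos2 hB ih => intro Γ hEq; exact Deriv.disjRpos2 (ih Γ hEq)
  | disjLa hA hB ihA ihB =>
    rename_i Γ1 Δ1 A B s1 C1 m
    intro Γ hEq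
    obtain ⟨u, h1, h2⟩ := top_cons_split (by simp) hEq
    subst h1; subst h2
    apply Deriv.disjLa
    · apply ihA; rw [Multiset.cons_swap A]
    · apply ihB; rw [Multiset.cons_swap B]
  | disjRneg hA hB ihA ihB =>
    intro Γ hEq; exact Deriv.disjRneg (ihA Γ hEq) (ihB Γ hEq)
  | disjLc hp ih => intro Γ hEq; exact Deriv.disjLc (ih Γ hEq)
  | impRpos hp ih =>
    rename_i Γ1 Δ1 A B m
    intro Γ hEq; subst hEq
    apply Deriv.impRpos
    apply ih; rw [Multiset.cons_swap A]
  | impLa hA hB ihA ihB =>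
    rename_i Γ1 Δ1 A B s1 C1 m
    intro Γ hEq
    obtain ⟨u, h1, h2⟩ := top_cons_split (by simp) hEq
    subst h1; subst h2
    apply Deriv.impLa
    · apply ihA; rw [Multiset.cons_swap (Form.imp A B)]
    · apply ihB; rw [Multiset.cons_swap B]
  | impRneg hA hB ihA ihB =>
    intro Γ hEq; exact Deriv.impRneg (ihA Γ hEq) (ihB Γ hEq)
  | impLc hp ih =>
    rename_i Γ1 Δ1 A B s1 C1 m
    intro Γ hEq; subst hEq
    apply Deriv.impLc
    apply ih; rw [Multiset.cons_swap A]
  | coimpRpos hA hB ihA ihB =>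
    intro Γ hEq; exact Deriv.coimpRpos (ihA Γ hEq) (ihB Γ hEq)
  | coimpLa hp ih =>
    rename_i Γ1 Δ1 A B s1 C1 m
    intro Γ hEq
    obtain ⟨u, h1, h2⟩ := top_cons_split (by simp) hEq
    subst h1; subst h2
    apply Deriv.coimpLa
    apply ih; rw [Multiset.cons_swap A]
  | coimpRneg hp ih => intro Γ hEq; exact Deriv.coimpRneg (ih Γ hEq)
  | coimpLc hA hB ihA ihB =>
    intro Γ hEq; exact Deriv.coimpLc (ihA Γ hEq) (ihB Γ hEq)

theorem inverted_weakening_top (Γ Δ : Multiset Form) (C : Form) (s : Pol) (n : ℕ)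
    (h : Deriv (Form.top ::ₘ Γ) Δ s C n) : Deriv Γ Δ s C n := inv_top_aux h Γ rfl
end

section
/- Height-preserving invertibility of weakening by ⊥ in the counterassumptions: for all finite multisets Γ, Δ, every formula C, every * ∈ {+, −}, and every natural number n, if the sequent (Γ; Δ, ⊥) ⊢* C is derivable in SC2Int with height at most n, then the sequent (Γ; Δ) ⊢* C is derivable in SC2Int with height at most n. -/
open Form Pol

lemma bot_split {X : Form} {Δ₀ Δ : Multiset Form} (hne : X ≠ Form.bot)
    (h : X ::ₘ Δ₀ = Form.bot ::ₘ Δ) :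
    ∃ Δ₁, Δ = X ::ₘ Δ₁ ∧ Δ₀ = Form.bot ::ₘ Δ₁ := by
  rcases (Multiset.cons_eq_cons).1 h with ⟨h1, _⟩ | ⟨_, u, h1, h2⟩
  · exact absurd h1 hne
  · exact ⟨u, h2, h1⟩

lemma inverted_weakening_bot_aux {Γ Δ' : Multiset Form} {s : Pol} {C : Form} {n : ℕ}
    (h : Deriv Γ Δ' s C n) :
    ∀ Δ, Δ' = Form.bot ::ₘ Δ → Deriv Γ Δ s C n := by
  induction h with
  | refPos Γ Δ₀ p n => exact fun Δ _ => .refPos Γ Δ p n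
  | refNeg Γ Δ₀ p n =>
    intro Δ hΔ
    obtain ⟨Δ₁, h1, _⟩ := bot_split (by simp) hΔ
    rw [h1]; exact .refNeg Γ Δ₁ p n
  | botLa Γ Δ₀ s C n => exact fun Δ _ => .botLa Γ Δ s C n
  | topLc Γ Δ₀ s C n =>
    intro Δ hΔ
    obtain ⟨Δ₁, h1, _⟩ := bot_split (by simp) hΔ
    rw [h1]; exact .topLc Γ Δ₁ s C n
  | botRneg Γ Δ₀ n => exact fun Δ _ => .botRneg Γ Δ n
  | topRpos Γ Δ₀ n => exact fun Δ _ => .topRpos Γ Δ n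
  | conjRpos _ _ ih1 ih2 => exact fun Δ hΔ => .conjRpos (ih1 Δ hΔ) (ih2 Δ hΔ)
  | conjLa _ ih => exact fun Δ hΔ => .conjLa (ih Δ hΔ)
  | conjRneg1 _ ih => exact fun Δ hΔ => .conjRneg1 (ih Δ hΔ)
  | conjRneg2 _ ih => exact fun Δ hΔ => .conjRneg2 (ih Δ hΔ)
  | @conjLc Γ Δ₀ A B s C n _ _ ih1 ih2 =>
    intro Δ hΔ
    obtain ⟨Δ₁, h1, h2⟩ := bot_split (by simp) hΔ
    rw [h1]
    exact .conjLc (ih1 (A ::ₘ Δ₁) (by rw [h2]; exact Multiset.cons_swap _ _ _))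
      (ih2 (B ::ₘ Δ₁) (by rw [h2]; exact Multiset.cons_swap _ _ _))
  | disjRpos1 _ ih => exact fun Δ hΔ => .disjRpos1 (ih Δ hΔ)
  | disjRpos2 _ ih => exact fun Δ hΔ => .disjRpos2 (ih Δ hΔ)
  | disjLa _ _ ih1 ih2 => exact fun Δ hΔ => .disjLa (ih1 Δ hΔ) (ih2 Δ hΔ)
  | disjRneg _ _ ih1 ih2 => exact fun Δ hΔ => .disjRneg (ih1 Δ hΔ) (ih2 Δ hΔ)
  | @disjLc Γ Δ₀ A B s C n _ ih =>
    intro Δ hΔ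
    obtain ⟨Δ₁, h1, h2⟩ := bot_split (by simp) hΔ
    rw [h1]
    refine .disjLc (ih (A ::ₘ B ::ₘ Δ₁) ?_)
    rw [h2, Multiset.cons_swap B, Multiset.cons_swap A]
  | impRpos _ ih => exact fun Δ hΔ => .impRpos (ih Δ hΔ)
  | impLa _ _ ih1 ih2 => exact fun Δ hΔ => .impLa (ih1 Δ hΔ) (ih2 Δ hΔ)
  | impRneg _ _ ih1 ih2 => exact fun Δ hΔ => .impRneg (ih1 Δ hΔ) (ih2 Δ hΔ)
  | @impLc Γ Δ₀ A B s C n _ ih =>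
    intro Δ hΔ
    obtain ⟨Δ₁, h1, h2⟩ := bot_split (by simp) hΔ
    rw [h1]
    exact .impLc (ih (B ::ₘ Δ₁) (by rw [h2]; exact Multiset.cons_swap _ _ _))
  | coimpRpos _ _ ih1 ih2 => exact fun Δ hΔ => .coimpRpos (ih1 Δ hΔ) (ih2 Δ hΔ)
  | @coimpLa Γ Δ₀ A B s C n _ ih =>
    intro Δ hΔ
    exact .coimpLa (ih (B ::ₘ Δ) (by rw [hΔ]; exact Multiset.cons_swap _ _ _))
  | @coimpRneg Γ Δ₀ A B n _ ih =>
    intro Δ hΔ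
    exact .coimpRneg (ih (B ::ₘ Δ) (by rw [hΔ]; exact Multiset.cons_swap _ _ _))
  | @coimpLc Γ Δ₀ A B s C n _ _ ih1 ih2 =>
    intro Δ hΔ
    obtain ⟨Δ₁, h1, h2⟩ := bot_split (by simp) hΔ
    rw [h1]
    exact .coimpLc
      (ih1 (Form.coimp A B ::ₘ Δ₁) (by rw [h2]; exact Multiset.cons_swap _ _ _))
      (ih2 (A ::ₘ Δ₁) (by rw [h2]; exact Multiset.cons_swap _ _ _))

theorem inverted_weakening_bot (Γ Δ : Multiset Form) (C : Form) (s : Pol) (n : ℕ)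
    (h : Deriv Γ (Form.bot ::ₘ Δ) s C n) : Deriv Γ Δ s C n :=
  inverted_weakening_bot_aux h Δ rfl
end

section
/- Height-preserving invertibility of the right premise of the rule →Lᵃ: for all finite multisets Γ, Δ, all formulas A, B, C, every * ∈ {+, −}, and every natural number n, if (Γ, A → B; Δ) ⊢* C is derivable in SC2Int with height at most n, then (Γ, B; Δ) ⊢* C is derivable in SC2Int with height at most n. -/
open Form Pol

lemma deriv_mono : ∀ {Γ Δ s C n}, Deriv Γ Δ s C n → ∀ {m}, n ≤ m → Deriv Γ Δ s C m := by
  intro Γ Δ s C n h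
  induction h with
  | refPos Γ Δ p n => intro m _; exact .refPos ..
  | refNeg Γ Δ p n => intro m _; exact .refNeg ..
  | botLa Γ Δ s C n => intro m _; exact .botLa ..
  | topLc Γ Δ s C n => intro m _; exact .topLc ..
  | botRneg Γ Δ n => intro m _; exact .botRneg ..
  | topRpos Γ Δ n => intro m _; exact .topRpos ..
  | conjRpos h1 h2 ih1 ih2 =>
    intro m hm
    obtain ⟨k, rfl⟩ : ∃ k, m = k + 1 := ⟨m - 1, by omega⟩
    exact .conjRpos (ih1 (by omega)) (ih2 (by omega))
  | conjLa h ih =>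
    intro m hm
    obtain ⟨k, rfl⟩ : ∃ k, m = k + 1 := ⟨m - 1, by omega⟩
    exact .conjLa (ih (by omega))
  | conjRneg1 h ih =>
    intro m hm
    obtain ⟨k, rfl⟩ : ∃ k, m = k + 1 := ⟨m - 1, by omega⟩
    exact .conjRneg1 (ih (by omega))
  | conjRneg2 h ih =>
    intro m hm
    obtain ⟨k, rfl⟩ : ∃ k, m = k + 1 := ⟨m - 1, by omega⟩
    exact .conjRneg2 (ih (by omega))
  | conjLc h1 h2 ih1 ih2 =>
    intro m hm
    obtain ⟨k, rfl⟩ : ∃ k, m = k + 1 := ⟨m - 1, by omega⟩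
    exact .conjLc (ih1 (by omega)) (ih2 (by omega))
  | disjRpos1 h ih =>
    intro m hm
    obtain ⟨k, rfl⟩ : ∃ k, m = k + 1 := ⟨m - 1, by omega⟩
    exact .disjRpos1 (ih (by omega))
  | disjRpos2 h ih =>
    intro m hm
    obtain ⟨k, rfl⟩ : ∃ k, m = k + 1 := ⟨m - 1, by omega⟩
    exact .disjRpos2 (ih (by omega))
  | disjLa h1 h2 ih1 ih2 =>
    intro m hm
    obtain ⟨k, rfl⟩ : ∃ k, m = k + 1 := ⟨m - 1, by omega⟩
    exact .disjLa (ih1 (by omega)) (ih2 (by omega))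
  | disjRneg h1 h2 ih1 ih2 =>
    intro m hm
    obtain ⟨k, rfl⟩ : ∃ k, m = k + 1 := ⟨m - 1, by omega⟩
    exact .disjRneg (ih1 (by omega)) (ih2 (by omega))
  | disjLc h ih =>
    intro m hm
    obtain ⟨k, rfl⟩ : ∃ k, m = k + 1 := ⟨m - 1, by omega⟩
    exact .disjLc (ih (by omega))
  | impRpos h ih =>
    intro m hm
    obtain ⟨k, rfl⟩ : ∃ k, m = k + 1 := ⟨m - 1, by omega⟩
    exact .impRpos (ih (by omega))
  | impLa h1 h2 ih1 ih2 =>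
    intro m hm
    obtain ⟨k, rfl⟩ : ∃ k, m = k + 1 := ⟨m - 1, by omega⟩
    exact .impLa (ih1 (by omega)) (ih2 (by omega))
  | impRneg h1 h2 ih1 ih2 =>
    intro m hm
    obtain ⟨k, rfl⟩ : ∃ k, m = k + 1 := ⟨m - 1, by omega⟩
    exact .impRneg (ih1 (by omega)) (ih2 (by omega))
  | impLc h ih =>
    intro m hm
    obtain ⟨k, rfl⟩ : ∃ k, m = k + 1 := ⟨m - 1, by omega⟩
    exact .impLc (ih (by omega))
  | coimpRpos h1 h2 ih1 ih2 =>
    intro m hm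
    obtain ⟨k, rfl⟩ : ∃ k, m = k + 1 := ⟨m - 1, by omega⟩
    exact .coimpRpos (ih1 (by omega)) (ih2 (by omega))
  | coimpLa h ih =>
    intro m hm
    obtain ⟨k, rfl⟩ : ∃ k, m = k + 1 := ⟨m - 1, by omega⟩
    exact .coimpLa (ih (by omega))
  | coimpRneg h ih =>
    intro m hm
    obtain ⟨k, rfl⟩ : ∃ k, m = k + 1 := ⟨m - 1, by omega⟩
    exact .coimpRneg (ih (by omega))
  | coimpLc h1 h2 ih1 ih2 =>
    intro m hm
    obtain ⟨k, rfl⟩ : ∃ k, m = k + 1 := ⟨m - 1, by omega⟩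
    exact .coimpLc (ih1 (by omega)) (ih2 (by omega))

private lemma swap3 {α : Type*} (a b c : α) (s : Multiset α) :
    a ::ₘ b ::ₘ c ::ₘ s = c ::ₘ a ::ₘ b ::ₘ s := by
  rw [Multiset.cons_swap b c, Multiset.cons_swap a c]

lemma inv_impLa_aux : ∀ {Γ₀ Δ s C n}, Deriv Γ₀ Δ s C n →
    ∀ {A B Γ}, Γ₀ = imp A B ::ₘ Γ → Deriv (B ::ₘ Γ) Δ s C n := by
  intro Γ₀ Δ s C n h
  induction h with
  | refPos Γ' Δ p n =>
    intro A B Γ hΓ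
    rcases Multiset.cons_eq_cons.mp hΓ with ⟨h1, _⟩ | ⟨_, u, hu1, hu2⟩
    · exact absurd h1 (by simp)
    · subst hu2; rw [Multiset.cons_swap]; exact .refPos ..
  | refNeg Γ' Δ p n =>
    intro A B Γ hΓ; exact .refNeg ..
  | botLa Γ' Δ s C n =>
    intro A B Γ hΓ
    rcases Multiset.cons_eq_cons.mp hΓ with ⟨h1, _⟩ | ⟨_, u, hu1, hu2⟩
    · exact absurd h1 (by simp)
    · subst hu2; rw [Multiset.cons_swap]; exact .botLa ..
  | topLc Γ' Δ s C n => intro A B Γ hΓ; exact .topLc ..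
  | botRneg Γ' Δ n => intro A B Γ hΓ; exact .botRneg ..
  | topRpos Γ' Δ n => intro A B Γ hΓ; exact .topRpos ..
  | conjRpos h1 h2 ih1 ih2 =>
    intro A B Γ hΓ; exact .conjRpos (ih1 hΓ) (ih2 hΓ)
  | conjLa h1 ih1 =>
    rename_i Γ' Δ' A' B' s' C' n'
    intro A B Γ hΓ
    rcases Multiset.cons_eq_cons.mp hΓ with ⟨h1, _⟩ | ⟨_, u, hu1, hu2⟩
    · exact absurd h1 (by simp)
    · subst hu1 hu2
      rw [Multiset.cons_swap]
      exact .conjLa (by rw [Multiset.cons_swap B' B, Multiset.cons_swap A' B]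
                        exact ih1 (swap3 ..))
  | conjRneg1 h ih => intro A B Γ hΓ; exact .conjRneg1 (ih hΓ)
  | conjRneg2 h ih => intro A B Γ hΓ; exact .conjRneg2 (ih hΓ)
  | conjLc h1 h2 ih1 ih2 =>
    intro A B Γ hΓ; exact .conjLc (ih1 hΓ) (ih2 hΓ)
  | disjRpos1 h ih => intro A B Γ hΓ; exact .disjRpos1 (ih hΓ)
  | disjRpos2 h ih => intro A B Γ hΓ; exact .disjRpos2 (ih hΓ)
  | disjLa h1 h2 ih1 ih2 =>
    rename_i Γ' Δ' A' B' s' C' n'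
    intro A B Γ hΓ
    rcases Multiset.cons_eq_cons.mp hΓ with ⟨h1, _⟩ | ⟨_, u, hu1, hu2⟩
    · exact absurd h1 (by simp)
    · subst hu1 hu2
      rw [Multiset.cons_swap]
      refine .disjLa ?_ ?_
      · rw [Multiset.cons_swap A' B]; exact ih1 (Multiset.cons_swap ..)
      · rw [Multiset.cons_swap B' B]; exact ih2 (Multiset.cons_swap ..)
  | disjRneg h1 h2 ih1 ih2 =>
    intro A B Γ hΓ; exact .disjRneg (ih1 hΓ) (ih2 hΓ)
  | disjLc h ih => intro A B Γ hΓ; exact .disjLc (ih hΓ)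
  | impRpos h ih =>
    rename_i Γ' Δ' A' B' n'
    intro A B Γ hΓ
    subst hΓ
    refine .impRpos ?_
    rw [Multiset.cons_swap A' B]
    exact ih (Multiset.cons_swap ..)
  | impLa h1 h2 ih1 ih2 =>
    rename_i Γ' Δ' A' B' s' C' n'
    intro A B Γ hΓ
    rcases Multiset.cons_eq_cons.mp hΓ with ⟨h1', hΓ'⟩ | ⟨_, u, hu1, hu2⟩
    · injection h1' with hA hB
      subst hA hB hΓ'
      exact deriv_mono h2 (Nat.le_succ _)
    · subst hu1 hu2
      rw [Multiset.cons_swap]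
      refine .impLa ?_ ?_
      · rw [Multiset.cons_swap _ B]; exact ih1 (Multiset.cons_swap ..)
      · rw [Multiset.cons_swap B' B]; exact ih2 (Multiset.cons_swap ..)
  | impRneg h1 h2 ih1 ih2 =>
    intro A B Γ hΓ; exact .impRneg (ih1 hΓ) (ih2 hΓ)
  | impLc h ih =>
    rename_i Γ' Δ' A' B' s' C' n'
    intro A B Γ hΓ
    subst hΓ
    refine .impLc ?_
    rw [Multiset.cons_swap A' B]
    exact ih (Multiset.cons_swap ..)
  | coimpRpos h1 h2 ih1 ih2 =>
    intro A B Γ hΓ; exact .coimpRpos (ih1 hΓ) (ih2 hΓ)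
  | coimpLa h ih =>
    rename_i Γ' Δ' A' B' s' C' n'
    intro A B Γ hΓ
    rcases Multiset.cons_eq_cons.mp hΓ with ⟨h1, _⟩ | ⟨_, u, hu1, hu2⟩
    · exact absurd h1 (by simp)
    · subst hu1 hu2
      rw [Multiset.cons_swap]
      refine .coimpLa ?_
      rw [Multiset.cons_swap A' B]
      exact ih (Multiset.cons_swap ..)
  | coimpRneg h ih => intro A B Γ hΓ; exact .coimpRneg (ih hΓ)
  | coimpLc h1 h2 ih1 ih2 =>
    intro A B Γ hΓ; exact .coimpLc (ih1 hΓ) (ih2 hΓ)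

theorem inversion_impLa (Γ Δ : Multiset Form) (A B C : Form) (s : Pol) (n : ℕ)
    (h : Deriv (Form.imp A B ::ₘ Γ) Δ s C n) :
    Deriv (B ::ₘ Γ) Δ s C n := inv_impLa_aux h rfl
end

section
/- Height-preserving invertibility of the rule ⤙Lᵃ: for all finite multisets Γ, Δ, all formulas A, B, C, every * ∈ {+, −}, and every natural number n, if (Γ, A ⤙ B; Δ) ⊢* C is derivable in SC2Int with height at most n, then (Γ, A; Δ, B) ⊢* C is derivable in SC2Int with height at most n. -/
open Form Pol

lemma deriv_succ : ∀ {Γ Δ : Multiset Form} {s : Pol} {C : Form} {n : ℕ},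
    Deriv Γ Δ s C n → Deriv Γ Δ s C (n + 1) := by
  intro Γ Δ s C n h
  induction h with
  | refPos Γ Δ p n => exact Deriv.refPos Γ Δ p (n+1)
  | refNeg Γ Δ p n => exact Deriv.refNeg Γ Δ p (n+1)
  | botLa Γ Δ s C n => exact Deriv.botLa Γ Δ s C (n+1)
  | topLc Γ Δ s C n => exact Deriv.topLc Γ Δ s C (n+1)
  | botRneg Γ Δ n => exact Deriv.botRneg Γ Δ (n+1)
  | topRpos Γ Δ n => exact Deriv.topRpos Γ Δ (n+1)
  | conjRpos _ _ ih1 ih2 => exact Deriv.conjRpos ih1 ih2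
  | conjLa _ ih => exact Deriv.conjLa ih
  | conjRneg1 _ ih => exact Deriv.conjRneg1 ih
  | conjRneg2 _ ih => exact Deriv.conjRneg2 ih
  | conjLc _ _ ih1 ih2 => exact Deriv.conjLc ih1 ih2
  | disjRpos1 _ ih => exact Deriv.disjRpos1 ih
  | disjRpos2 _ ih => exact Deriv.disjRpos2 ih
  | disjLa _ _ ih1 ih2 => exact Deriv.disjLa ih1 ih2
  | disjRneg _ _ ih1 ih2 => exact Deriv.disjRneg ih1 ih2
  | disjLc _ ih => exact Deriv.disjLc ih
  | impRpos _ ih => exact Deriv.impRpos ih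
  | impLa _ _ ih1 ih2 => exact Deriv.impLa ih1 ih2
  | impRneg _ _ ih1 ih2 => exact Deriv.impRneg ih1 ih2
  | impLc _ ih => exact Deriv.impLc ih
  | coimpRpos _ _ ih1 ih2 => exact Deriv.coimpRpos ih1 ih2
  | coimpLa _ ih => exact Deriv.coimpLa ih
  | coimpRneg _ ih => exact Deriv.coimpRneg ih
  | coimpLc _ _ ih1 ih2 => exact Deriv.coimpLc ih1 ih2

lemma inv_coimpLa_aux {A B : Form} :
    ∀ {Γ' Δ : Multiset Form} {s : Pol} {C : Form} {n : ℕ},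
    Deriv Γ' Δ s C n → ∀ Γ, Γ' = coimp A B ::ₘ Γ →
    Deriv (A ::ₘ Γ) (B ::ₘ Δ) s C n := by
  intro Γ' Δ s C n h
  induction h with
  | refPos Γ₀ Δ p n =>
    intro Γ hΓ
    rcases Multiset.cons_eq_cons.mp hΓ with ⟨h1, _⟩ | ⟨_, cs, h1, h2⟩
    · exact absurd h1 (by simp)
    · subst h2
      rw [Multiset.cons_swap]
      exact Deriv.refPos _ _ p n
  | refNeg Γ₀ Δ p n =>
    intro Γ hΓ; subst hΓ
    rw [Multiset.cons_swap]
    exact Deriv.refNeg _ _ p n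
  | botLa Γ₀ Δ s C n =>
    intro Γ hΓ
    rcases Multiset.cons_eq_cons.mp hΓ with ⟨h1, _⟩ | ⟨_, cs, h1, h2⟩
    · exact absurd h1 (by simp)
    · subst h2
      rw [Multiset.cons_swap]
      exact Deriv.botLa _ _ s C n
  | topLc Γ₀ Δ s C n =>
    intro Γ hΓ; subst hΓ
    rw [Multiset.cons_swap]
    exact Deriv.topLc _ _ s C n
  | botRneg Γ₀ Δ n => intro Γ hΓ; exact Deriv.botRneg _ _ n
  | topRpos Γ₀ Δ n => intro Γ hΓ; exact Deriv.topRpos _ _ n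
  | conjRpos _ _ ih1 ih2 =>
    intro Γ hΓ; exact Deriv.conjRpos (ih1 Γ hΓ) (ih2 Γ hΓ)
  | @conjLa Γ₀ Δ A' B' s C n hp ih =>
    intro Γ hΓ
    rcases Multiset.cons_eq_cons.mp hΓ with ⟨h1, _⟩ | ⟨_, cs, h1, h2⟩
    · exact absurd h1 (by simp)
    · subst h2; subst h1
      have e := ih (A' ::ₘ B' ::ₘ cs) (by
        rw [Multiset.cons_swap (a := B') (b := coimp A B),
            Multiset.cons_swap (a := A') (b := coimp A B)])
      rw [Multiset.cons_swap]
      apply Deriv.conjLa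
      rw [Multiset.cons_swap (a := A) (b := A'),
          Multiset.cons_swap (a := A) (b := B')] at e
      exact e
  | conjRneg1 _ ih => intro Γ hΓ; exact Deriv.conjRneg1 (ih Γ hΓ)
  | conjRneg2 _ ih => intro Γ hΓ; exact Deriv.conjRneg2 (ih Γ hΓ)
  | @conjLc Γ₀ Δ A' B' s C n hp1 hp2 ih1 ih2 =>
    intro Γ hΓ
    have h1 := ih1 Γ hΓ
    have h2 := ih2 Γ hΓ
    rw [Multiset.cons_swap] at h1 h2 ⊢
    exact Deriv.conjLc h1 h2
  | disjRpos1 _ ih => intro Γ hΓ; exact Deriv.disjRpos1 (ih Γ hΓ)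
  | disjRpos2 _ ih => intro Γ hΓ; exact Deriv.disjRpos2 (ih Γ hΓ)
  | @disjLa Γ₀ Δ A' B' s C n hp1 hp2 ih1 ih2 =>
    intro Γ hΓ
    rcases Multiset.cons_eq_cons.mp hΓ with ⟨h1, _⟩ | ⟨_, cs, h1, h2⟩
    · exact absurd h1 (by simp)
    · subst h2; subst h1
      have e1 := ih1 (A' ::ₘ cs) (Multiset.cons_swap _ _ _)
      have e2 := ih2 (B' ::ₘ cs) (Multiset.cons_swap _ _ _)
      rw [Multiset.cons_swap] at e1 e2 ⊢
      exact Deriv.disjLa e1 e2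
  | disjRneg _ _ ih1 ih2 =>
    intro Γ hΓ; exact Deriv.disjRneg (ih1 Γ hΓ) (ih2 Γ hΓ)
  | @disjLc Γ₀ Δ A' B' s C n hp ih =>
    intro Γ hΓ
    have h1 := ih Γ hΓ
    rw [Multiset.cons_swap (a := B) (b := A'),
        Multiset.cons_swap (a := B) (b := B')] at h1
    rw [Multiset.cons_swap]
    exact Deriv.disjLc h1
  | @impRpos Γ₀ Δ A' B' n hp ih =>
    intro Γ hΓ; subst hΓ
    have h1 := ih (A' ::ₘ Γ) (Multiset.cons_swap _ _ _)
    rw [Multiset.cons_swap] at h1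
    exact Deriv.impRpos h1
  | @impLa Γ₀ Δ A' B' s C n hp1 hp2 ih1 ih2 =>
    intro Γ hΓ
    rcases Multiset.cons_eq_cons.mp hΓ with ⟨h1, _⟩ | ⟨_, cs, h1, h2⟩
    · exact absurd h1 (by simp)
    · subst h2; subst h1
      have e1 := ih1 (imp A' B' ::ₘ cs) (Multiset.cons_swap _ _ _)
      have e2 := ih2 (B' ::ₘ cs) (Multiset.cons_swap _ _ _)
      rw [Multiset.cons_swap] at e1 e2 ⊢
      exact Deriv.impLa e1 e2
  | impRneg _ _ ih1 ih2 =>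
    intro Γ hΓ; exact Deriv.impRneg (ih1 Γ hΓ) (ih2 Γ hΓ)
  | @impLc Γ₀ Δ A' B' s C n hp ih =>
    intro Γ hΓ; subst hΓ
    have h1 := ih (A' ::ₘ Γ) (Multiset.cons_swap _ _ _)
    rw [Multiset.cons_swap (a := A) (b := A'),
        Multiset.cons_swap (a := B) (b := B')] at h1
    rw [Multiset.cons_swap]
    exact Deriv.impLc h1
  | coimpRpos _ _ ih1 ih2 =>
    intro Γ hΓ; exact Deriv.coimpRpos (ih1 Γ hΓ) (ih2 Γ hΓ)
  | @coimpLa Γ₀ Δ A' B' s C n hp ih =>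
    intro Γ hΓ
    rcases Multiset.cons_eq_cons.mp hΓ with ⟨h1, h2⟩ | ⟨_, cs, h1, h2⟩
    · obtain ⟨rfl, rfl⟩ : A' = A ∧ B' = B := by
        cases h1; exact ⟨rfl, rfl⟩
      subst h2
      exact deriv_succ hp
    · subst h2; subst h1
      have e1 := ih (A' ::ₘ cs) (Multiset.cons_swap _ _ _)
      rw [Multiset.cons_swap (a := A) (b := A'),
          Multiset.cons_swap (a := B) (b := B')] at e1
      rw [Multiset.cons_swap]
      exact Deriv.coimpLa e1
  | @coimpRneg Γ₀ Δ A' B' n hp ih =>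
    intro Γ hΓ
    have h1 := ih Γ hΓ
    rw [Multiset.cons_swap] at h1
    exact Deriv.coimpRneg h1
  | @coimpLc Γ₀ Δ A' B' s C n hp1 hp2 ih1 ih2 =>
    intro Γ hΓ
    have e1 := ih1 Γ hΓ
    have e2 := ih2 Γ hΓ
    rw [Multiset.cons_swap] at e1 e2 ⊢
    exact Deriv.coimpLc e1 e2

theorem inversion_coimpLa (Γ Δ : Multiset Form) (A B C : Form) (s : Pol) (n : ℕ)
    (h : Deriv (Form.coimp A B ::ₘ Γ) Δ s C n) :
    Deriv (A ::ₘ Γ) (B ::ₘ Δ) s C n := inv_coimpLa_aux h Γ rfl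
end
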